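/- Rank-one increment formula for the MSE: assume W = V_K^H H^H H V_K. Then for every subset S ⊆ {1,…,n} and every u ∈ {1,…,n} with u ∉ S, MSE(S ∪ {u}) − MSE(S) = − ( v_u^H M(S)^{-1} W M(S)^{-1} v_u ) / ( λ_{w,u} + v_u^H M(S)^{-1} v_u ), where both the numerator and the quantity v_u^H M(S)^{-1} v_u are nonnegative real numbers. -/

import Mathlib

/-!
`M(S ∪ {u})` is the rank-one update `M(S) + λ_{w,u}⁻¹ v_u v_uᴴ`, so the Sherman–Morrison formula
gives `M(S ∪ {u})⁻¹ = M(S)⁻¹ - (λ_{w,u} + q)⁻¹ M(S)⁻¹ v_u v_uᴴ M(S)⁻¹` with `q = v_uᴴ M(S)⁻¹ v_u`.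
Substituting into `K*` and cycling the trace turns the correction term into
`v_uᴴ M(S)⁻¹ W M(S)⁻¹ v_u`. Both quadratic forms are nonnegative reals because `M(S)` is positive
definite and `M(S)⁻¹ W M(S)⁻¹ = (H V_K M(S)⁻¹)ᴴ (H V_K M(S)⁻¹)`.
-/

open Matrix Finset ComplexOrder

/-- The matrix `M(S) = Λ⁻¹ + ∑_{i ∈ S} λ_{w,i}⁻¹ v_i v_iᴴ`. -/
noncomputable def Mmat {n k : ℕ} (lam : Fin k → ℝ) (lw : Fin n → ℝ)
    (v : Fin n → Fin k → ℂ) (S : Finset (Fin n)) : Matrix (Fin k) (Fin k) ℂ :=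
  (Matrix.diagonal fun j => (lam j : ℂ))⁻¹ +
    ∑ i ∈ S, ((lw i : ℂ))⁻¹ • Matrix.vecMulVec (v i) (star (v i))

/-- The matrix `V_K` whose `i`-th row is `v_iᴴ`. -/
noncomputable def VKmat {n k : ℕ} (v : Fin n → Fin k → ℂ) : Matrix (Fin n) (Fin k) ℂ :=
  Matrix.of fun i j => star (v i j)

/-- The optimal interpolation error covariance `K*(S) = H V_K M(S)⁻¹ V_Kᴴ Hᴴ`. -/
noncomputable def Kstar {n k m : ℕ} (lam : Fin k → ℝ) (lw : Fin n → ℝ)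
    (v : Fin n → Fin k → ℂ) (H : Matrix (Fin m) (Fin n) ℂ) (S : Finset (Fin n)) :
    Matrix (Fin m) (Fin m) ℂ :=
  H * VKmat v * (Mmat lam lw v S)⁻¹ * (VKmat v)ᴴ * Hᴴ

/-- The interpolation mean-square error `MSE(S) = trace K*(S)`, a (nonnegative) real. -/
noncomputable def MSE {n k m : ℕ} (lam : Fin k → ℝ) (lw : Fin n → ℝ)
    (v : Fin n → Fin k → ℂ) (H : Matrix (Fin m) (Fin n) ℂ) (S : Finset (Fin n)) : ℝ :=
  ((Kstar lam lw v H S).trace).re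

theorem Matrix.inv_add_smul_vecMulVec {ι K : Type*} [Fintype ι] [DecidableEq ι] [Field K]
    {A : Matrix ι ι K} (hA : IsUnit A) (a b : ι → K) {c : K} (hc : c ≠ 0)
    (hs : c⁻¹ + b ⬝ᵥ (A⁻¹ *ᵥ a) ≠ 0) :
    (A + c • vecMulVec a b)⁻¹ =
      A⁻¹ - (c⁻¹ + b ⬝ᵥ (A⁻¹ *ᵥ a))⁻¹ • (A⁻¹ * vecMulVec a b * A⁻¹) := by
  set s := c⁻¹ + b ⬝ᵥ (A⁻¹ *ᵥ a)
  have hAA : A * A⁻¹ = 1 := mul_nonsing_inv A ((isUnit_iff_isUnit_det A).mp hA)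
  have hV : vecMulVec a b * A⁻¹ * vecMulVec a b = (s - c⁻¹) • vecMulVec a b := by
    rw [vecMulVec_mul, vecMulVec_mul_vecMulVec, vecMulVec_smul, ← dotProduct_mulVec]
    simp [s]
  refine inv_eq_right_inv ?_
  calc (A + c • vecMulVec a b) * (A⁻¹ - s⁻¹ • (A⁻¹ * vecMulVec a b * A⁻¹))
      = A * A⁻¹ + (c - s⁻¹ - c * s⁻¹ * (s - c⁻¹)) • (vecMulVec a b * A⁻¹) := by
        simp only [add_mul, mul_sub, Matrix.mul_smul, Matrix.smul_mul, ← Matrix.mul_assoc, hAA,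
          one_mul, hV]
        module
    _ = 1 := by
        rw [hAA, show c - s⁻¹ - c * s⁻¹ * (s - c⁻¹) = 0 by field_simp; ring, zero_smul, add_zero]

theorem Matrix.trace_mul_vecMulVec_mul {ι κ R : Type*} [Fintype ι] [Fintype κ] [CommRing R]
    (P : Matrix κ ι R) (a b : ι → R) (Q : Matrix ι κ R) :
    (P * vecMulVec a b * Q).trace = b ⬝ᵥ ((Q * P) *ᵥ a) := by
  rw [mul_vecMulVec, vecMulVec_mul, trace_vecMulVec, dotProduct_comm, ← dotProduct_mulVec,
    mulVec_mulVec]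

section

variable {n k m : ℕ} (lam : Fin k → ℝ) (lw : Fin n → ℝ) (v : Fin n → Fin k → ℂ)

theorem Mmat_insert {S : Finset (Fin n)} {u : Fin n} (hu : u ∉ S) :
    Mmat lam lw v (insert u S) =
      Mmat lam lw v S + (lw u : ℂ)⁻¹ • vecMulVec (v u) (star (v u)) := by
  rw [Mmat, Mmat, sum_insert hu]
  abel

theorem Mmat_posDef {lam lw} (hlam : ∀ j, 0 < lam j) (hlw : ∀ i, 0 < lw i)
    (S : Finset (Fin n)) : (Mmat lam lw v S).PosDef :=
  (PosDef.diagonal fun j => by exact_mod_cast hlam j).inv.add_posSemidef <|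
    posSemidef_sum S fun i _ => (posSemidef_vecMulVec_self_star (v i)).smul <|
      inv_nonneg.mpr (by exact_mod_cast (hlw i).le)

theorem Kstar_eq_mul_conjTranspose (H : Matrix (Fin m) (Fin n) ℂ) (S : Finset (Fin n)) :
    Kstar lam lw v H S = H * VKmat v * (Mmat lam lw v S)⁻¹ * (H * VKmat v)ᴴ := by
  rw [Kstar, conjTranspose_mul, Matrix.mul_assoc _ _ Hᴴ]

theorem Mmat_insert_inv {lam lw} (hlam : ∀ j, 0 < lam j) (hlw : ∀ i, 0 < lw i)
    {S : Finset (Fin n)} {u : Fin n} (hu : u ∉ S) :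
    (Mmat lam lw v (insert u S))⁻¹ = (Mmat lam lw v S)⁻¹ -
      ((lw u : ℂ) + star (v u) ⬝ᵥ ((Mmat lam lw v S)⁻¹ *ᵥ v u))⁻¹ •
        ((Mmat lam lw v S)⁻¹ * vecMulVec (v u) (star (v u)) * (Mmat lam lw v S)⁻¹) := by
  have hA := Mmat_posDef v hlam hlw S
  have hlwu : (0 : ℂ) < lw u := by exact_mod_cast hlw u
  have hs : (lw u : ℂ) + star (v u) ⬝ᵥ ((Mmat lam lw v S)⁻¹ *ᵥ v u) ≠ 0 :=
    (add_pos_of_pos_of_nonneg hlwu (hA.inv.posSemidef.dotProduct_mulVec_nonneg _)).ne'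
  rw [Mmat_insert lam lw v hu,
    inv_add_smul_vecMulVec hA.isUnit _ _ (inv_ne_zero hlwu.ne') (by rwa [inv_inv]), inv_inv]

theorem trace_Kstar_insert_sub {lam lw} (hlam : ∀ j, 0 < lam j) (hlw : ∀ i, 0 < lw i)
    (H : Matrix (Fin m) (Fin n) ℂ) {S : Finset (Fin n)} {u : Fin n} (hu : u ∉ S) :
    (Kstar lam lw v H (insert u S)).trace - (Kstar lam lw v H S).trace =
      -(((lw u : ℂ) + star (v u) ⬝ᵥ ((Mmat lam lw v S)⁻¹ *ᵥ v u))⁻¹ *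
        star (v u) ⬝ᵥ (((Mmat lam lw v S)⁻¹ * ((VKmat v)ᴴ * Hᴴ * H * VKmat v) *
          (Mmat lam lw v S)⁻¹) *ᵥ v u)) := by
  set B := H * VKmat v
  set Ai := (Mmat lam lw v S)⁻¹
  have hW : (VKmat v)ᴴ * Hᴴ * H * VKmat v = Bᴴ * B := by
    simp only [B, conjTranspose_mul, Matrix.mul_assoc]
  have hB : B * (Ai * vecMulVec (v u) (star (v u)) * Ai) * Bᴴ =
      B * Ai * vecMulVec (v u) (star (v u)) * (Ai * Bᴴ) := by
    simp only [Matrix.mul_assoc]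
  rw [Kstar_eq_mul_conjTranspose, Kstar_eq_mul_conjTranspose, Mmat_insert_inv v hlam hlw hu,
    Matrix.mul_sub, Matrix.sub_mul, trace_sub, Matrix.mul_smul, Matrix.smul_mul, trace_smul, hB,
    trace_mul_vecMulVec_mul, hW]
  simp only [Matrix.mul_assoc, smul_eq_mul]
  ring

end

/-- Rank-one increment formula for the MSE: with `W = V_Kᴴ Hᴴ H V_K`,
for every `S` and every `u ∉ S`,
`MSE(S ∪ {u}) - MSE(S) = -(v_uᴴ M(S)⁻¹ W M(S)⁻¹ v_u) / (λ_{w,u} + v_uᴴ M(S)⁻¹ v_u)`,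
where both the numerator and `v_uᴴ M(S)⁻¹ v_u` are nonnegative real numbers. -/
theorem MSE_rank_one_increment
    (n k m : ℕ)
    (v : Fin n → Fin k → ℂ)
    (H : Matrix (Fin m) (Fin n) ℂ)
    (lam : Fin k → ℝ) (hlam : ∀ j, 0 < lam j)
    (lw : Fin n → ℝ) (hlw : ∀ i, 0 < lw i)
    (W : Matrix (Fin k) (Fin k) ℂ)
    (hWdef : W = (VKmat v)ᴴ * Hᴴ * H * VKmat v)
    (S : Finset (Fin n)) (u : Fin n) (hu : u ∉ S)
    (Nval qval : ℂ)
    (hN : Nval = star (v u) ⬝ᵥ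
      (((Mmat lam lw v S)⁻¹ * W * (Mmat lam lw v S)⁻¹) *ᵥ v u))
    (hq : qval = star (v u) ⬝ᵥ ((Mmat lam lw v S)⁻¹ *ᵥ v u)) :
    Nval.im = 0 ∧ 0 ≤ Nval.re ∧ qval.im = 0 ∧ 0 ≤ qval.re ∧
      MSE lam lw v H (insert u S) - MSE lam lw v H S =
        -(Nval.re / (lw u + qval.re)) := by
  have hA := Mmat_posDef v hlam hlw S
  have hWA : (Mmat lam lw v S)⁻¹ * W * (Mmat lam lw v S)⁻¹ =
      (H * VKmat v * (Mmat lam lw v S)⁻¹)ᴴ * (H * VKmat v * (Mmat lam lw v S)⁻¹) := by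
    simp only [hWdef, conjTranspose_mul, hA.inv.isHermitian.eq, Matrix.mul_assoc]
  have hN0 : 0 ≤ Nval :=
    hN ▸ hWA ▸ (posSemidef_conjTranspose_mul_self _).dotProduct_mulVec_nonneg _
  have hq0 : 0 ≤ qval := hq ▸ hA.inv.posSemidef.dotProduct_mulVec_nonneg (v u)
  obtain ⟨hNre, hNim⟩ := Complex.nonneg_iff.mp hN0
  obtain ⟨hqre, hqim⟩ := Complex.nonneg_iff.mp hq0
  refine ⟨hNim.symm, hNre, hqim.symm, hqre, ?_⟩
  have hdiff := trace_Kstar_insert_sub v hlam hlw H hu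
  rw [← hWdef, ← hN, ← hq, Complex.eq_re_of_ofReal_le (z := Nval) (r := 0) (by simpa using hN0),
    Complex.eq_re_of_ofReal_le (z := qval) (r := 0) (by simpa using hq0)] at hdiff
  simp only [MSE, ← Complex.sub_re, hdiff]
  rw [div_eq_inv_mul]
  norm_cast
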